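/- Let A be an m×n integer matrix with linearly independent rows, and suppose the columns of B form an LLL-reduced basis of the lattice L_N(A) = { x ∈ Z^n : Ax = 0 }. Then for Q_N = { y ∈ R^{n−m} : ℓ_2 − x_0 ≤ By ≤ w_2 − x_0 }, width(e_{n−m}, Q_N) ≤ gcd(A) · 2^{(n−m−1)/4} · ‖w_2 − ℓ_2‖ / det(A Aᵀ)^{1/(2(n−m))}. -/

import Mathlib

/-- The Gram-Schmidt orthogonalization of a finite family of vectors. -/
noncomputable def gsE {E : Type*} [NormedAddCommGroup E] [InnerProductSpace ℝ E] {r : ℕ}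
    (c : Fin r → E) : Fin r → E :=
  haveI : WellFoundedLT (Fin r) := inferInstance
  InnerProductSpace.gramSchmidt ℝ c

/-- The columns of a real matrix, viewed as vectors in Euclidean space. -/
noncomputable def colsE (m r : ℕ) (B : Matrix (Fin m) (Fin r) ℝ) :
    Fin r → EuclideanSpace ℝ (Fin m) :=
  fun j => (WithLp.equiv 2 (Fin m → ℝ)).symm fun i => B i j

/-- Gram-Schmidt coefficients `μ_{ij} = ⟨b_i, b_j^*⟩ / ‖b_j^*‖²`. -/
noncomputable def muGS {E : Type*} [NormedAddCommGroup E] [InnerProductSpace ℝ E] {r : ℕ}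
    (b : Fin r → E) (i j : Fin r) : ℝ :=
  (inner ℝ (b i) (gsE b j) : ℝ) / ‖gsE b j‖ ^ 2

/-- A linearly independent family is LLL reduced if `|μ_{ij}| ≤ 1/2` for `j < i`, and
`‖μ_{i,i-1} b_{i-1}^* + b_i^*‖² ≥ (3/4) ‖b_{i-1}^*‖²` for consecutive indices. -/
def LLLReduced {E : Type*} [NormedAddCommGroup E] [InnerProductSpace ℝ E] {r : ℕ}
    (b : Fin r → E) : Prop :=
  LinearIndependent ℝ b ∧
  (∀ i j : Fin r, j < i → |muGS b i j| ≤ 1 / 2) ∧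
  (∀ i : Fin r, ∀ h : (i : ℕ) + 1 < r,
    ‖muGS b ⟨(i : ℕ) + 1, h⟩ i • gsE b i + gsE b ⟨(i : ℕ) + 1, h⟩‖ ^ 2
      ≥ 3 / 4 * ‖gsE b i‖ ^ 2)

/-- The gcd of the `m × m` subdeterminants (maximal minors) of an `m × n` integer matrix. -/
noncomputable def gcdMinors (m n : ℕ) (A : Matrix (Fin m) (Fin n) ℤ) : ℕ :=
  Finset.univ.gcd fun f : Fin m ↪ Fin n => (A.submatrix id f).det.natAbs

/-!
For `y, y' ∈ Q_N`, pairing `B (y - y') = ∑ⱼ (y - y')ⱼ bⱼ` with the last Gram–Schmidt vector `b*`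
kills every column but the last, so `(y - y')_last ‖b*‖² = ⟪b*, B (y - y')⟫ ≤ ‖b*‖ ‖w₂ - ℓ₂‖`
and the width is at most `‖w₂ - ℓ₂‖ / ‖b*‖`.

To bound `‖b*‖` from below, the LLL conditions give `‖bᵢ*‖² ≤ 2^{r-1-i} ‖b*‖²`, hence
`det (BᵀB) = ∏ ‖bᵢ*‖² ≤ 2^{r(r-1)/2} ‖b*‖^{2r}`. On the other side, `ker A` is a direct summand
of `ℤⁿ`, so `B` extends to a unimodular matrix `[D | B]`; comparing `det` of `[D | B]ᵀ [Aᵀ | B]`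
and of `[Aᵀ | B]ᵀ [Aᵀ | B]` (both block triangular because `AB = 0`) yields
`det (AAᵀ) = det (AD)² det (BᵀB)`. Finally `|det (AD)| = gcd(A)`: every maximal minor of
`A = (AD) W` is a multiple of `det (AD)`, and Cauchy–Binet writes `det (AD)` as a combination of
maximal minors of `A`. Altogether `det (AAᵀ)^{1/2r} ≤ gcd(A)^{1/r} 2^{(r-1)/4} ‖b*‖`, and
`gcd(A)^{1/r} ≤ gcd(A)` because `gcd(A) ≥ 1`.
-/

open InnerProductSpace Matrix

section GramSchmidt

variable {E : Type*} [NormedAddCommGroup E] [InnerProductSpace ℝ E] {r : ℕ}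

theorem gsE_eq_gramSchmidt (b : Fin r → E) : gsE b = gramSchmidt ℝ b := rfl

theorem inner_gsE_of_lt (b : Fin r → E) {i j : Fin r} (h : j < i) :
    inner ℝ (gsE b i) (b j) = 0 :=
  gramSchmidt_inv_triangular ℝ b h

theorem inner_gsE_self (b : Fin r → E) (i : Fin r) :
    inner ℝ (gsE b i) (b i) = ‖gsE b i‖ ^ 2 := by
  conv_lhs => rw [gramSchmidt_def'' ℝ b i]
  rw [gsE_eq_gramSchmidt, inner_add_right, inner_sum, real_inner_self_eq_norm_sq,
    Finset.sum_eq_zero fun k hk => ?_, add_zero]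
  rw [inner_smul_right, gramSchmidt_orthogonal ℝ b (Finset.mem_Iio.mp hk).ne', mul_zero]

theorem muGS_self (b : Fin r → E) {i : Fin r} (hi : gsE b i ≠ 0) : muGS b i i = 1 := by
  rw [muGS, real_inner_comm, inner_gsE_self, div_self (by positivity)]

theorem muGS_of_lt (b : Fin r → E) {i j : Fin r} (h : i < j) : muGS b i j = 0 := by
  rw [muGS, real_inner_comm, inner_gsE_of_lt b h, zero_div]

theorem inner_eq_muGS_mul_norm_gsE_sq (b : Fin r → E) (i k : Fin r) :
    inner ℝ (b i) (gsE b k) = muGS b i k * ‖gsE b k‖ ^ 2 := by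
  by_cases hk : gsE b k = 0
  · simp [hk]
  · rw [muGS, div_mul_cancel₀ _ (by positivity)]

theorem sum_muGS_smul_gsE (b : Fin r → E) (i : Fin r) :
    ∑ k, muGS b i k • gsE b k = b i := by
  have hIic : ∑ k, muGS b i k • gsE b k = ∑ k ∈ Finset.Iic i, muGS b i k • gsE b k :=
    (Finset.sum_subset (Finset.subset_univ _) fun k _ hk => by
      rw [muGS_of_lt b (not_le.mp (by simpa using hk)), zero_smul]).symm
  have hself : muGS b i i • gsE b i = gsE b i := by
    by_cases hi : gsE b i = 0
    · rw [hi, smul_zero]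
    · rw [muGS_self b hi, one_smul]
  conv_rhs => rw [gramSchmidt_def'' ℝ b i]
  rw [hIic, ← Finset.Iio_insert, Finset.sum_insert Finset.notMem_Iio_self, hself]
  congr 1
  refine Finset.sum_congr rfl fun k _ => ?_
  rw [muGS, real_inner_comm]
  rfl

theorem gram_eq_muGS_mul_diagonal_mul_transpose (b : Fin r → E) :
    gram ℝ b = of (muGS b) * diagonal (fun k => ‖gsE b k‖ ^ 2) * (of (muGS b))ᵀ := by
  ext i j
  rw [gram_apply, mul_apply]
  conv_lhs => rw [← sum_muGS_smul_gsE b j]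
  rw [inner_sum]
  refine Finset.sum_congr rfl fun k _ => ?_
  rw [inner_smul_right, inner_eq_muGS_mul_norm_gsE_sq, mul_diagonal, transpose_apply, of_apply,
    of_apply]
  ring

theorem det_gram_eq_prod_norm_gsE_sq {b : Fin r → E} (hb : LinearIndependent ℝ b) :
    (gram ℝ b).det = ∏ k, ‖gsE b k‖ ^ 2 := by
  have hT : (of (muGS b)).det = 1 := by
    rw [det_of_isLowerTriangular (of (muGS b)) fun i j (h : i < j) => muGS_of_lt b h]
    exact Finset.prod_eq_one fun i _ => muGS_self b (gramSchmidt_ne_zero i hb)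
  rw [gram_eq_muGS_mul_diagonal_mul_transpose, det_mul, det_mul, det_transpose, hT, det_diagonal,
    one_mul, mul_one]

theorem mul_norm_gsE_le_norm_sum_smul (b : Fin r → E) {k : Fin r} (hk : ∀ j, j ≤ k)
    (z : Fin r → ℝ) : z k * ‖gsE b k‖ ≤ ‖∑ j, z j • b j‖ := by
  rcases (norm_nonneg (gsE b k)).eq_or_lt with hs | hs
  · rw [← hs, mul_zero]
    exact norm_nonneg _
  have hinner : inner ℝ (gsE b k) (∑ j, z j • b j) = z k * ‖gsE b k‖ ^ 2 := by
    rw [inner_sum, Finset.sum_eq_single k (fun j _ hj => by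
      rw [inner_smul_right, inner_gsE_of_lt b ((hk j).lt_of_ne hj), mul_zero]) (by simp),
      inner_smul_right, inner_gsE_self]
  refine le_of_mul_le_mul_right ?_ hs
  calc z k * ‖gsE b k‖ * ‖gsE b k‖ = inner ℝ (gsE b k) (∑ j, z j • b j) := by rw [hinner]; ring
    _ ≤ ‖gsE b k‖ * ‖∑ j, z j • b j‖ := real_inner_le_norm _ _
    _ = ‖∑ j, z j • b j‖ * ‖gsE b k‖ := mul_comm _ _

end GramSchmidt

namespace LLLReduced

variable {E : Type*} [NormedAddCommGroup E] [InnerProductSpace ℝ E] {r : ℕ} {b : Fin r → E}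

theorem norm_gsE_sq_le_two_mul_succ (h : LLLReduced b) (i : Fin r) (hi : (i : ℕ) + 1 < r) :
    ‖gsE b i‖ ^ 2 ≤ 2 * ‖gsE b ⟨i + 1, hi⟩‖ ^ 2 := by
  obtain ⟨-, hsize, hlovasz⟩ := h
  set μ := muGS b ⟨i + 1, hi⟩ i
  have hlt : i < ⟨i + 1, hi⟩ := Fin.lt_def.mpr (Nat.lt_succ_self i)
  have hμ : μ ^ 2 ≤ 1 / 4 := by
    have := hsize _ _ hlt
    rw [← sq_abs]
    nlinarith [abs_nonneg μ]
  have hpyth : ‖μ • gsE b i + gsE b ⟨i + 1, hi⟩‖ ^ 2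
      = μ ^ 2 * ‖gsE b i‖ ^ 2 + ‖gsE b ⟨i + 1, hi⟩‖ ^ 2 := by
    rw [norm_add_sq_real, inner_smul_left, gsE_eq_gramSchmidt, gramSchmidt_orthogonal ℝ b hlt.ne,
      norm_smul, mul_pow, Real.norm_eq_abs, sq_abs]
    simp
  have := hlovasz i hi
  rw [hpyth] at this
  nlinarith [sq_nonneg ‖gsE b i‖]

theorem norm_gsE_sq_le_two_pow_mul (h : LLLReduced b) {i j : Fin r} (hij : i ≤ j) :
    ‖gsE b i‖ ^ 2 ≤ 2 ^ ((j : ℕ) - i) * ‖gsE b j‖ ^ 2 := by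
  have key : ∀ (d : ℕ) (hd : (i : ℕ) + d < r),
      ‖gsE b i‖ ^ 2 ≤ 2 ^ d * ‖gsE b ⟨i + d, hd⟩‖ ^ 2 := by
    intro d
    induction d with
    | zero => intro _; simp
    | succ d ih =>
      intro hd
      calc ‖gsE b i‖ ^ 2 ≤ 2 ^ d * ‖gsE b ⟨i + d, by omega⟩‖ ^ 2 := ih _
        _ ≤ 2 ^ d * (2 * ‖gsE b ⟨i + (d + 1), hd⟩‖ ^ 2) := by
          gcongr
          exact norm_gsE_sq_le_two_mul_succ h ⟨i + d, by omega⟩ hd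
        _ = 2 ^ (d + 1) * ‖gsE b ⟨i + (d + 1), hd⟩‖ ^ 2 := by ring
  have hj : (⟨i + (j - i), by omega⟩ : Fin r) = j := Fin.ext (by simp; omega)
  simpa only [hj] using key (j - i) (by omega)

theorem det_gram_le (h : LLLReduced b) {k : Fin r} (hk : (k : ℕ) = r - 1) :
    (gram ℝ b).det ≤ (2 ^ (((r : ℝ) - 1) / 4) * ‖gsE b k‖) ^ (2 * r) := by
  set N := ∑ i : Fin r, ((k : ℕ) - i) with hN
  have hsum : 2 * N = r * (r - 1) := by
    rw [hN, hk, Fin.sum_univ_eq_sum_range (fun i => r - 1 - i),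
      Finset.sum_range_reflect (fun i => i) r, mul_comm, Finset.sum_range_id_mul_two]
  have hpow : (2 : ℝ) ^ N = (2 ^ (((r : ℝ) - 1) / 4)) ^ (2 * r) := by
    rw [← Real.rpow_natCast, ← Real.rpow_natCast, ← Real.rpow_mul (by norm_num)]
    congr 1
    push_cast
    have hsumℝ := congrArg (Nat.cast : ℕ → ℝ) hsum
    push_cast [Nat.cast_sub (show 1 ≤ r by omega)] at hsumℝ
    linear_combination hsumℝ / 2
  calc (gram ℝ b).det = ∏ i, ‖gsE b i‖ ^ 2 := det_gram_eq_prod_norm_gsE_sq h.1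
    _ ≤ ∏ i : Fin r, 2 ^ ((k : ℕ) - i) * ‖gsE b k‖ ^ 2 :=
      Finset.prod_le_prod (fun _ _ => by positivity)
        fun i _ => h.norm_gsE_sq_le_two_pow_mul (Fin.le_def.mpr (by omega))
    _ = (2 ^ (((r : ℝ) - 1) / 4) * ‖gsE b k‖) ^ (2 * r) := by
      rw [Finset.prod_mul_distrib, Finset.prod_pow_eq_pow_sum, hpow, Finset.prod_const,
        Finset.card_univ, Fintype.card_fin, mul_pow, pow_mul, pow_mul]

end LLLReduced

theorem gram_colsE {m r : ℕ} (B : Matrix (Fin m) (Fin r) ℝ) :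
    gram ℝ (colsE m r B) = Bᵀ * B := by
  ext i j
  simp [gram_apply, colsE, mul_apply, PiLp.inner_apply, mul_comm]

theorem sum_smul_colsE {m r : ℕ} (B : Matrix (Fin m) (Fin r) ℝ) (z : Fin r → ℝ) :
    ∑ j, z j • colsE m r B j = WithLp.toLp 2 (B *ᵥ z) := by
  ext i
  simp [colsE, mulVec, dotProduct, mul_comm]

theorem EuclideanSpace.norm_le_of_forall_abs_le {ι : Type*} [Fintype ι]
    {x y : EuclideanSpace ℝ ι} (h : ∀ i, |x i| ≤ |y i|) : ‖x‖ ≤ ‖y‖ := by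
  rw [EuclideanSpace.norm_eq, EuclideanSpace.norm_eq]
  gcongr with i
  exact h i

theorem Real.sSup_sub_sInf_le {s : Set ℝ} (hs : s.Nonempty) {C : ℝ}
    (h : ∀ a ∈ s, ∀ b ∈ s, a - b ≤ C) : sSup s - sInf s ≤ C := by
  have : sSup s ≤ C + sInf s := csSup_le hs fun a ha => by
    linarith [le_csInf hs fun b hb => show a - C ≤ b by linarith [h a ha b hb]]
  linarith

theorem width_le_div_norm_gsE {n r : ℕ} (B : Matrix (Fin n) (Fin r) ℝ)
    (ℓ w : EuclideanSpace ℝ (Fin n)) (x : Fin n → ℝ) {k : Fin r} (hk : ∀ j, j ≤ k)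
    (hgs : gsE (colsE n r B) k ≠ 0) {Q : Set (Fin r → ℝ)}
    (hQ : ∀ y ∈ Q, ∀ i, ℓ i - x i ≤ (B *ᵥ y) i ∧ (B *ᵥ y) i ≤ w i - x i) (hne : Q.Nonempty) :
    sSup ((fun y => y k) '' Q) - sInf ((fun y => y k) '' Q)
      ≤ ‖w - ℓ‖ / ‖gsE (colsE n r B) k‖ := by
  refine Real.sSup_sub_sInf_le (hne.image _) ?_
  rintro _ ⟨y, hy, rfl⟩ _ ⟨y', hy', rfl⟩
  rw [le_div_iff₀ (norm_pos_iff.mpr hgs)]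
  calc (y k - y' k) * ‖gsE (colsE n r B) k‖ = (y - y') k * ‖gsE (colsE n r B) k‖ := rfl
    _ ≤ ‖∑ j, (y - y') j • colsE n r B j‖ := mul_norm_gsE_le_norm_sum_smul _ hk _
    _ ≤ ‖w - ℓ‖ := by
      rw [sum_smul_colsE, mulVec_sub]
      refine EuclideanSpace.norm_le_of_forall_abs_le fun i => ?_
      obtain ⟨hyℓ, hyw⟩ := hQ y hy i
      obtain ⟨hy'ℓ, hy'w⟩ := hQ y' hy' i
      simp only [PiLp.sub_apply, Pi.sub_apply]
      exact (abs_le.mpr ⟨by linarith, by linarith⟩).trans (le_abs_self _)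

theorem rpow_one_div_le_of_le_sq_mul_pow {d g t : ℝ} {k : ℕ} (hk : 0 < k) (hd : 0 ≤ d)
    (hg : 1 ≤ g) (ht : 0 ≤ t) (h : d ≤ g ^ 2 * t ^ (2 * k)) :
    d ^ (1 / (2 * (k : ℝ))) ≤ g * t := by
  rw [one_div, Real.rpow_inv_le_iff_of_pos hd (by positivity) (by positivity),
    show 2 * (k : ℝ) = ((2 * k : ℕ) : ℝ) by push_cast; ring, Real.rpow_natCast, mul_pow]
  have hg2 : g ^ 2 ≤ g ^ (2 * k) := pow_le_pow_right₀ hg (by omega)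
  exact h.trans (by gcongr)

theorem LinearMap.exists_isCompl_ker {R M N : Type*} [Ring R] [AddCommGroup M] [Module R M]
    [AddCommGroup N] [Module R N] (φ : M →ₗ[R] N) [Module.Projective R (range φ)] :
    ∃ p : Submodule R M, IsCompl p (ker φ) := by
  obtain ⟨σ, hσ⟩ := φ.rangeRestrict.exists_rightInverse_of_surjective φ.range_rangeRestrict
  have hidem : IsIdempotentElem (σ ∘ₗ φ.rangeRestrict) := by
    change (σ ∘ₗ φ.rangeRestrict) ∘ₗ (σ ∘ₗ φ.rangeRestrict) = σ ∘ₗ φ.rangeRestrict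
    rw [comp_assoc, ← comp_assoc φ.rangeRestrict, hσ, id_comp]
  refine ⟨range (σ ∘ₗ φ.rangeRestrict), ?_⟩
  have := IsIdempotentElem.isCompl hidem
  rwa [ker_comp_of_ker_eq_bot _ (ker_eq_bot_of_inverse hσ), ker_rangeRestrict] at this

theorem exists_fromCols_mul_eq_one {m n r : ℕ} (A : Matrix (Fin m) (Fin n) ℤ)
    (B : Matrix (Fin n) (Fin r) ℤ) (hmr : m + r = n) (hAB : A * B = 0)
    (hBspan : ∀ x, A *ᵥ x = 0 → ∃ c, x = B *ᵥ c) (hB : Function.Injective B.mulVec) :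
    ∃ (D : Matrix (Fin n) (Fin m) ℤ) (W : Matrix (Fin m ⊕ Fin r) (Fin n) ℤ),
      fromCols D B * W = 1 := by
  set K := LinearMap.ker A.mulVecLin
  have hBK : ∀ c, B *ᵥ c ∈ K := fun c => by
    rw [LinearMap.mem_ker, mulVecLin_apply, mulVec_mulVec, hAB, zero_mulVec]
  obtain ⟨ψ, hψ⟩ : ∃ ψ : (Fin r → ℤ) ≃ₗ[ℤ] K, ∀ c, (ψ c : Fin n → ℤ) = B *ᵥ c :=
    ⟨.ofBijective (B.mulVecLin.codRestrict K hBK) ⟨fun c c' h => hB (congrArg Subtype.val h),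
      fun ⟨x, hx⟩ => by
        obtain ⟨c, rfl⟩ := hBspan x hx
        exact ⟨c, rfl⟩⟩, fun _ => rfl⟩
  obtain ⟨p, hp⟩ := A.mulVecLin.exists_isCompl_ker
  let bp := Module.Free.chooseBasis ℤ p
  let v₀ := (bp.prod ((Pi.basisFun ℤ (Fin r)).map ψ)).map (p.prodEquivOfIsCompl K hp)
  have hcard : Fintype.card (Module.Free.ChooseBasisIndex ℤ p) = m := by
    have := Module.finrank_eq_card_basis v₀
    rw [Module.finrank_fin_fun, Fintype.card_sum, Fintype.card_fin] at this
    omega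
  let v := v₀.reindex ((Fintype.equivFinOfCardEq hcard).sumCongr (Equiv.refl _))
  refine ⟨of fun i k => v (Sum.inl k) i, v.toMatrix (Pi.basisFun ℤ (Fin n)), ?_⟩
  have hU : fromCols (of fun i k => v (Sum.inl k) i) B = (Pi.basisFun ℤ (Fin n)).toMatrix v := by
    ext i (k | j)
    · simp [Module.Basis.toMatrix_apply]
    · simp [Module.Basis.toMatrix_apply, v, v₀, hψ]
  rw [hU, Module.Basis.toMatrix_mul_toMatrix_flip]

section Determinants

variable {R : Type*} [CommRing R] {ι κ ρ : Type*} [Fintype ι] [Fintype κ] [Fintype ρ]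
  [DecidableEq ι] [DecidableEq κ] [DecidableEq ρ]

theorem det_transpose_mul_fromCols_submatrix (P P' : Matrix ι κ R) (Q Q' : Matrix ι ρ R)
    (e : ι ≃ κ ⊕ ρ) (h : Qᵀ * P' = 0) :
    (((fromCols P Q).submatrix id e)ᵀ * (fromCols P' Q').submatrix id e).det
      = (Pᵀ * P').det * (Qᵀ * Q').det := by
  rw [transpose_submatrix, ← submatrix_mul _ _ _ _ _ Function.bijective_id,
    det_submatrix_equiv_self, transpose_fromCols, fromRows_mul_fromCols, h, det_fromBlocks_zero₂₁]

theorem det_fromCols_submatrix_sq_mul (A : Matrix κ ι R) (B : Matrix ι ρ R) (D : Matrix ι κ R)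
    (e : ι ≃ κ ⊕ ρ) (hAB : A * B = 0) :
    ((fromCols D B).submatrix id e).det ^ 2 * ((A * Aᵀ).det * (Bᵀ * B).det)
      = ((A * D).det * (Bᵀ * B).det) ^ 2 := by
  set U := (fromCols D B).submatrix id e
  set C := (fromCols Aᵀ B).submatrix id e
  have hBA : Bᵀ * Aᵀ = 0 := by rw [← transpose_mul, hAB, transpose_zero]
  have hUC : (Uᵀ * C).det = (A * D).det * (Bᵀ * B).det := by
    rw [det_transpose_mul_fromCols_submatrix _ _ _ _ e hBA, ← det_transpose (Dᵀ * Aᵀ),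
      transpose_mul, transpose_transpose, transpose_transpose]
  have hCC : (Cᵀ * C).det = (A * Aᵀ).det * (Bᵀ * B).det := by
    rw [det_transpose_mul_fromCols_submatrix _ _ _ _ e hBA, transpose_transpose]
  rw [← hUC, ← hCC, det_mul, det_mul, det_transpose, det_transpose]
  ring

theorem dvd_det_mul_of_forall_dvd_det_submatrix (A : Matrix κ ι R) (D : Matrix ι κ R) {a : R}
    (h : ∀ f : κ ↪ ι, a ∣ (A.submatrix id f).det) : a ∣ (A * D).det := by
  have hexpand : (A * D).det = ∑ p : κ → ι,
      (∏ k, D (p k) k) * detRowAlternating (fun k => (Aᵀ (p k) : κ → R)) := by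
    have hrows : (A * D)ᵀ = fun k => ∑ j, D j k • (Aᵀ j : κ → R) := by
      ext k k'
      simp [mul_apply, Finset.sum_apply, mul_comm]
    rw [← det_transpose, hrows]
    exact ((detRowAlternating (R := R) (n := κ)).toMultilinearMap.map_sum
      (fun k j => D j k • (Aᵀ j : κ → R))).trans (Finset.sum_congr rfl fun p _ =>
        (detRowAlternating (R := R) (n := κ)).toMultilinearMap.map_smul_univ _ _)
  rw [hexpand]
  refine Finset.dvd_sum fun p _ => Dvd.dvd.mul_left ?_ _
  by_cases hp : Function.Injective p
  · have hminor : detRowAlternating (fun k => (Aᵀ (p k) : κ → R))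
        = (A.submatrix id (⟨p, hp⟩ : κ ↪ ι)).det := by
      rw [← det_transpose (A.submatrix id _)]
      rfl
    exact hminor ▸ h ⟨p, hp⟩
  · obtain ⟨k, k', hpk, hkk'⟩ := Function.not_injective_iff.mp hp
    have hzero : detRowAlternating (fun k => (Aᵀ (p k) : κ → R)) = 0 :=
      det_zero_of_row_eq (M := of fun k => (Aᵀ (p k) : κ → R)) hkk'
        (congrArg (fun j => (Aᵀ j : κ → R)) hpk)
    rw [hzero]
    exact dvd_zero a

end Determinants

theorem gcdMinors_eq_natAbs_det_mul {m n : ℕ} (A : Matrix (Fin m) (Fin n) ℤ)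
    (D : Matrix (Fin n) (Fin m) ℤ) (W : Matrix (Fin m) (Fin n) ℤ) (h : A * D * W = A) :
    gcdMinors m n A = (A * D).det.natAbs := by
  refine Nat.dvd_antisymm ?_ (Finset.dvd_gcd fun f _ => Int.natAbs_dvd_natAbs.mpr ?_)
  · exact Int.natCast_dvd.mp (dvd_det_mul_of_forall_dvd_det_submatrix A D
      fun f => Int.natCast_dvd.mpr (Finset.gcd_dvd (Finset.mem_univ f)))
  · have hsub : A.submatrix id f = A * D * W.submatrix id f := by
      conv_lhs => rw [← h]
      rfl
    rw [hsub, det_mul]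
    exact dvd_mul_right _ _

theorem det_mul_transpose_eq_gcdMinors_sq_mul {m n r : ℕ} (A : Matrix (Fin m) (Fin n) ℤ)
    (B : Matrix (Fin n) (Fin r) ℤ) (hmr : m + r = n) (hAB : A * B = 0)
    (hBspan : ∀ x, A *ᵥ x = 0 → ∃ c, x = B *ᵥ c) (hB : (Bᵀ * B).det ≠ 0) :
    (A * Aᵀ).det = (gcdMinors m n A : ℤ) ^ 2 * (Bᵀ * B).det := by
  have hBinj : Function.Injective B.mulVec := fun c c' hcc' => sub_eq_zero.mp <|
    eq_zero_of_mulVec_eq_zero hB (by rw [← mulVec_mulVec, mulVec_sub, hcc', sub_self, mulVec_zero])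
  obtain ⟨D, W, hDW⟩ := exists_fromCols_mul_eq_one A B hmr hAB hBspan hBinj
  let e : Fin n ≃ Fin m ⊕ Fin r := (finCongr hmr.symm).trans finSumFinEquiv.symm
  have hU : ((fromCols D B).submatrix id e).det ^ 2 = 1 := by
    refine Int.isUnit_sq (IsUnit.of_mul_eq_one (W.submatrix e id).det ?_)
    rw [← det_mul, submatrix_mul_equiv, hDW, submatrix_id_id, det_one]
  have hA : A * D * W.toRows₁ = A := by
    calc A * D * W.toRows₁ = A * (fromCols D B * fromRows W.toRows₁ W.toRows₂) := by
          rw [fromCols_mul_fromRows, Matrix.mul_add, ← Matrix.mul_assoc, ← Matrix.mul_assoc, hAB,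
            Matrix.zero_mul, add_zero]
      _ = A := by rw [fromRows_toRows, hDW, Matrix.mul_one]
  have key := det_fromCols_submatrix_sq_mul A B D e hAB
  rw [hU, one_mul] at key
  rw [gcdMinors_eq_natAbs_det_mul A D _ hA, Int.natCast_natAbs, sq_abs]
  exact mul_right_cancel₀ hB (by linear_combination key)

theorem det_mul_transpose_ne_zero_of_linearIndependent {K m n : Type*} [Field K] [LinearOrder K]
    [IsStrictOrderedRing K] [Fintype m] [Fintype n] [DecidableEq m] (A : Matrix m n K)
    (hA : LinearIndependent K A.row) : (A * Aᵀ).det ≠ 0 := by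
  have hrows : LinearIndependent K (A * Aᵀ).row := by
    rw [linearIndependent_iff_card_eq_finrank_span, Set.finrank, ← rank_eq_finrank_span_row,
      rank_self_mul_transpose, hA.rank_matrix]
  exact (isUnit_iff_isUnit_det _).mp (linearIndependent_rows_iff_isUnit.mp hrows) |>.ne_zero

theorem det_gram_colsE_intCast {n r : ℕ} (B : Matrix (Fin n) (Fin r) ℤ) :
    (gram ℝ (colsE n r (B.map (Int.cast : ℤ → ℝ)))).det = ((Bᵀ * B).det : ℝ) := by
  rw [gram_colsE, Int.cast_det]
  congr 1
  ext i j
  simp [mul_apply]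

theorem det_mul_transpose_ne_zero_of_linearIndependent_rat {m n : ℕ}
    (A : Matrix (Fin m) (Fin n) ℤ) (hA : LinearIndependent ℚ fun i j => (A i j : ℚ)) :
    (A * Aᵀ).det ≠ 0 := by
  have hmap : (A * Aᵀ).map (fun x : ℤ => (x : ℚ))
      = A.map (Int.cast : ℤ → ℚ) * (A.map (Int.cast : ℤ → ℚ))ᵀ := by
    ext i j
    simp [mul_apply]
  rw [← Int.cast_ne_zero (α := ℚ), Int.cast_det, hmap]
  exact det_mul_transpose_ne_zero_of_linearIndependent _ hA

theorem nullspace_width_bound_general (m n : ℕ)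
    (A : Matrix (Fin m) (Fin n) ℤ)
    (hA : LinearIndependent ℚ (fun i : Fin m => fun j : Fin n => (A i j : ℚ)))
    (B : Matrix (Fin n) (Fin (n - m)) ℤ)
    (hBnull : ∀ j, A.mulVec (fun i => B i j) = 0)
    (hBspan : ∀ x : Fin n → ℤ, A.mulVec x = 0 → ∃ c : Fin (n - m) → ℤ, x = B.mulVec c)
    (hlll : LLLReduced (colsE n (n - m) (B.map (Int.cast : ℤ → ℝ))))
    (ℓ₂ w₂ : EuclideanSpace ℝ (Fin n)) (x₀ : Fin n → ℤ)
    (Q : Set (Fin (n - m) → ℝ))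
    (hQ : Q = { y | ∀ i, ℓ₂ i - (x₀ i : ℝ) ≤ (B.map (Int.cast : ℤ → ℝ)).mulVec y i ∧
      (B.map (Int.cast : ℤ → ℝ)).mulVec y i ≤ w₂ i - (x₀ i : ℝ) })
    (hne : Q.Nonempty)
    (lastIdx : Fin (n - m)) (hlast : (lastIdx : ℕ) = n - m - 1) :
    sSup ((fun y => y lastIdx) '' Q) - sInf ((fun y => y lastIdx) '' Q)
      ≤ (gcdMinors m n A : ℝ) * 2 ^ ((((n - m : ℕ) : ℝ) - 1) / 4) * ‖w₂ - ℓ₂‖ /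
        (((A * A.transpose).det : ℝ)) ^ ((1 : ℝ) / (2 * ((n - m : ℕ) : ℝ))) := by
  set b := colsE n (n - m) (B.map (Int.cast : ℤ → ℝ))
  set g : ℝ := (gcdMinors m n A : ℝ)
  have hnm : 0 < n - m := lastIdx.pos
  have hgs : gsE b lastIdx ≠ 0 := gramSchmidt_ne_zero lastIdx hlll.1
  have hAB : A * B = 0 := by
    ext i j
    simpa [mulVec, dotProduct, mul_apply] using congrFun (hBnull j) i
  have hG : 0 < (gram ℝ b).det := (posDef_gram_of_linearIndependent hlll.1).det_pos
  have hdet : ((A * Aᵀ).det : ℝ) = g ^ 2 * (gram ℝ b).det := by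
    rw [det_gram_colsE_intCast] at hG ⊢
    rw [det_mul_transpose_eq_gcdMinors_sq_mul A B (by omega) hAB hBspan (by exact_mod_cast hG.ne')]
    push_cast
    rfl
  have hdet_pos : 0 < ((A * Aᵀ).det : ℝ) := (hdet ▸ by positivity : (0 : ℝ) ≤ _).lt_of_ne'
    (Int.cast_ne_zero.mpr (det_mul_transpose_ne_zero_of_linearIndependent_rat A hA))
  have hg : 1 ≤ g := Nat.one_le_cast.mpr <| Nat.one_le_iff_ne_zero.mpr fun hg0 =>
    hdet_pos.ne' (by simp [hdet, g, hg0])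
  have hroot := rpow_one_div_le_of_le_sq_mul_pow hnm hdet_pos.le hg (by positivity)
    (hdet ▸ mul_le_mul_of_nonneg_left (hlll.det_gram_le hlast) (sq_nonneg g))
  calc _ ≤ ‖w₂ - ℓ₂‖ / ‖gsE b lastIdx‖ :=
        width_le_div_norm_gsE _ ℓ₂ w₂ _ (fun j => Fin.le_def.mpr (by omega)) hgs
          (by rw [hQ]; exact fun _ hy => hy) hne
    _ = g * 2 ^ ((((n - m : ℕ) : ℝ) - 1) / 4) * ‖w₂ - ℓ₂‖ /
          (g * (2 ^ ((((n - m : ℕ) : ℝ) - 1) / 4) * ‖gsE b lastIdx‖)) := by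
      rw [← mul_assoc, mul_div_mul_left _ _ (by positivity)]
    _ ≤ _ := div_le_div_of_nonneg_left (by positivity) (Real.rpow_pos_of_pos hdet_pos _) hroot

/-- if the columns of `B` form an LLL-reduced basis of
`L_N(A) = {x ∈ ℤ^n : Ax = 0}`, then the width of the nullspace reformulation polyhedron
`Q_N = {y : ℓ₂ - x₀ ≤ By ≤ w₂ - x₀}` along the last unit vector is at most
`gcd(A) · 2^{(n-m-1)/4} ‖w₂ - ℓ₂‖ / det(A Aᵀ)^{1/(2(n-m))}`. -/
theorem nullspace_width_bound (m n : ℕ) (hmn : m < n)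
    (A : Matrix (Fin m) (Fin n) ℤ)
    (hA : LinearIndependent ℚ (fun i : Fin m => fun j : Fin n => (A i j : ℚ)))
    (B : Matrix (Fin n) (Fin (n - m)) ℤ)
    (hBnull : ∀ j, A.mulVec (fun i => B i j) = 0)
    (hBspan : ∀ x : Fin n → ℤ, A.mulVec x = 0 → ∃ c : Fin (n - m) → ℤ, x = B.mulVec c)
    (hlll : LLLReduced (colsE n (n - m) (B.map (Int.cast : ℤ → ℝ))))
    (ℓ₂ w₂ : EuclideanSpace ℝ (Fin n)) (x₀ : Fin n → ℤ)
    (Q : Set (Fin (n - m) → ℝ))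
    (hQ : Q = { y | ∀ i, ℓ₂ i - (x₀ i : ℝ) ≤ (B.map (Int.cast : ℤ → ℝ)).mulVec y i ∧
      (B.map (Int.cast : ℤ → ℝ)).mulVec y i ≤ w₂ i - (x₀ i : ℝ) })
    (hne : Q.Nonempty)
    (lastIdx : Fin (n - m)) (hlast : (lastIdx : ℕ) = n - m - 1)
    (hba : BddAbove ((fun y => y lastIdx) '' Q))
    (hbb : BddBelow ((fun y => y lastIdx) '' Q)) :
    sSup ((fun y => y lastIdx) '' Q) - sInf ((fun y => y lastIdx) '' Q)
      ≤ (gcdMinors m n A : ℝ) * 2 ^ ((((n - m : ℕ) : ℝ) - 1) / 4) * ‖w₂ - ℓ₂‖ /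
        (((A * A.transpose).det : ℝ)) ^ ((1 : ℝ) / (2 * ((n - m : ℕ) : ℝ))) :=
  nullspace_width_bound_general m n A hA B hBnull hBspan hlll ℓ₂ w₂ x₀ Q hQ hne lastIdx hlast
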